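/- arXiv:1808.10007 — 2 statements merged into one kernel-verified Lean document; each statement's English description precedes it below -/
import Mathlib

section
/- (Derivability Adjustment Theorem between Km and Tm) For every finite set Γ ∪ {φ} of modal formulas: Γ ⊢_Tm φ if and only if there exist sets Υ and Υ' of modal formulas such that Γ ∪ {∘δ : δ ∈ Υ} ∪ {∘'γ : γ ∈ Υ'} ⊢_Km φ, where ∘δ denotes □δ→◇δ and ∘'γ denotes (□γ→γ)∧(□¬γ→¬γ). -/
/- ## Syntax of the modal language -/

inductive Form : Type
  | var : Nat → Form
  | neg : Form → Form
  | imp : Form → Form → Form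
  | box : Form → Form
  deriving DecidableEq

namespace Form
/-- ◇α := ¬□¬α -/
def dia (α : Form) : Form := neg (box (neg α))
/-- α∨β := ¬α→β -/
def disj (α β : Form) : Form := imp (neg α) β
/-- α∧β := ¬(α→¬β) -/
def conj (α β : Form) : Form := neg (imp α (neg β))
end Form

open Form

/-- Substitution instances of classical tautologies over {¬,→}: formulas true under
every Boolean assignment that respects negation and implication. -/
def Taut (φ : Form) : Prop :=
  ∀ v : Form → Bool,
    (∀ α, v (Form.neg α) = !(v α)) →
    (∀ α β, v (Form.imp α β) = (!(v α) || v β)) →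
    v φ = true

/-- Hilbert-style derivations from a set of premises, with Modus Ponens as the only
inference rule, given a set `Ax` of axioms. -/
inductive Deriv (Ax : Form → Prop) (Γ : Set Form) : Form → Prop
  | prem {φ : Form} : φ ∈ Γ → Deriv Ax Γ φ
  | ax {φ : Form} : Ax φ → Deriv Ax Γ φ
  | mp {φ ψ : Form} : Deriv Ax Γ (Form.imp φ ψ) → Deriv Ax Γ φ → Deriv Ax Γ ψ

/- ## Axiom schemas -/

def axK (α β : Form) : Form := (box (α.imp β)).imp ((box α).imp (box β))
def axK1 (α β : Form) : Form := (box (α.imp β)).imp ((dia α).imp (dia β))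
def axK2 (α β : Form) : Form := (dia (α.imp β)).imp ((box α).imp (dia β))
def axM1 (α β : Form) : Form := (Form.neg (dia α)).imp (box (α.imp β))
def axM2 (α β : Form) : Form := (box β).imp (box (α.imp β))
def axM3 (α β : Form) : Form := (dia β).imp (dia (α.imp β))
def axM4 (α β : Form) : Form := (dia (Form.neg α)).imp (dia (α.imp β))
def axT (α : Form) : Form := (box α).imp α
def axD (α : Form) : Form := (box α).imp (dia α)
def axDN1 (α : Form) : Form := (box α).imp (box (Form.neg (Form.neg α)))
def axDN2 (α : Form) : Form := (box (Form.neg (Form.neg α))).imp (box α)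
def ax4 (α : Form) : Form := (box α).imp (box (box α))
def ax5 (α : Form) : Form := (dia (box α)).imp (box α)
def axKdet (α β : Form) : Form := (box (α.imp β)).imp ((dia α).imp (box β))

def axK' (α β : Form) : Form := (dia α).imp (axK α β)
def axK1' (α β : Form) : Form := (dia (Form.neg β)).imp (axK1 α β)
def axK2' (α β : Form) : Form := (dia α).imp (axK2 α β)
def axM3' (α β : Form) : Form := ((dia α).disj (dia (Form.neg α))).imp (axM3 α β)
def axM4' (α β : Form) : Form := (dia (Form.neg β)).imp (axM4 α β)
def axI1 (α β : Form) : Form :=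
  ((box α).conj (box (Form.neg α))).imp ((box (α.imp β)).conj (box (Form.neg (α.imp β))))
def axI2 (α β : Form) : Form :=
  ((box β).conj (box (Form.neg β))).imp ((box (α.imp β)).conj (box (Form.neg (α.imp β))))

/-- The recovery operator ∘α := □α→◇α. -/
def circm (α : Form) : Form := (box α).imp (dia α)
/-- •α := ¬∘α. -/
def bulm (α : Form) : Form := Form.neg (circm α)
/-- The recovery operator ∘'α := (□α→α)∧(□¬α→¬α). -/
def circm' (α : Form) : Form :=
  ((box α).imp α).conj ((box (Form.neg α)).imp (Form.neg α))

/- ## Hilbert calculi -/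

/-- The system Km. -/
inductive KmAx : Form → Prop
  | pc {φ : Form} : Taut φ → KmAx φ
  | k' (α β : Form) : KmAx (axK' α β)
  | k1' (α β : Form) : KmAx (axK1' α β)
  | k2' (α β : Form) : KmAx (axK2' α β)
  | m1 (α β : Form) : KmAx (axM1 α β)
  | m2 (α β : Form) : KmAx (axM2 α β)
  | m3' (α β : Form) : KmAx (axM3' α β)
  | m4' (α β : Form) : KmAx (axM4' α β)
  | i1 (α β : Form) : KmAx (axI1 α β)
  | i2 (α β : Form) : KmAx (axI2 α β)
  | dn1 (α : Form) : KmAx (axDN1 α)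
  | dn2 (α : Form) : KmAx (axDN2 α)

/-- The system K4m = Km + (4). -/
inductive K4mAx : Form → Prop
  | km {φ : Form} : KmAx φ → K4mAx φ
  | four (α : Form) : K4mAx (ax4 α)

/-- The system K45m = Km + (4) + (5). -/
inductive K45mAx : Form → Prop
  | km {φ : Form} : KmAx φ → K45mAx φ
  | four (α : Form) : K45mAx (ax4 α)
  | five (α : Form) : K45mAx (ax5 α)

/-- The system Dm. -/
inductive DmAx : Form → Prop
  | pc {φ : Form} : Taut φ → DmAx φ
  | k (α β : Form) : DmAx (axK α β)
  | k1 (α β : Form) : DmAx (axK1 α β)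
  | k2 (α β : Form) : DmAx (axK2 α β)
  | m1 (α β : Form) : DmAx (axM1 α β)
  | m2 (α β : Form) : DmAx (axM2 α β)
  | m3 (α β : Form) : DmAx (axM3 α β)
  | m4 (α β : Form) : DmAx (axM4 α β)
  | d (α : Form) : DmAx (axD α)
  | dn1 (α : Form) : DmAx (axDN1 α)
  | dn2 (α : Form) : DmAx (axDN2 α)

/-- The system Tm. -/
inductive TmAx : Form → Prop
  | pc {φ : Form} : Taut φ → TmAx φ
  | k (α β : Form) : TmAx (axK α β)
  | k1 (α β : Form) : TmAx (axK1 α β)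
  | k2 (α β : Form) : TmAx (axK2 α β)
  | m1 (α β : Form) : TmAx (axM1 α β)
  | m2 (α β : Form) : TmAx (axM2 α β)
  | m3 (α β : Form) : TmAx (axM3 α β)
  | m4 (α β : Form) : TmAx (axM4 α β)
  | t (α : Form) : TmAx (axT α)
  | dn1 (α : Form) : TmAx (axDN1 α)
  | dn2 (α : Form) : TmAx (axDN2 α)

/-- The system T45m = Tm + (4) + (5). -/
inductive T45mAx : Form → Prop
  | tm {φ : Form} : TmAx φ → T45mAx φ
  | four (α : Form) : T45mAx (ax4 α)
  | five (α : Form) : T45mAx (ax5 α)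

/-- The system Tmd: Tm with (K1) replaced by (Kdet). -/
inductive TmdAx : Form → Prop
  | pc {φ : Form} : Taut φ → TmdAx φ
  | k (α β : Form) : TmdAx (axK α β)
  | kdet (α β : Form) : TmdAx (axKdet α β)
  | k2 (α β : Form) : TmdAx (axK2 α β)
  | m1 (α β : Form) : TmdAx (axM1 α β)
  | m2 (α β : Form) : TmdAx (axM2 α β)
  | m3 (α β : Form) : TmdAx (axM3 α β)
  | m4 (α β : Form) : TmdAx (axM4 α β)
  | t (α : Form) : TmdAx (axT α)
  | dn1 (α : Form) : TmdAx (axDN1 α)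
  | dn2 (α : Form) : TmdAx (axDN2 α)

/-- The system Tm4d = Tmd + (4). -/
inductive Tm4dAx : Form → Prop
  | tmd {φ : Form} : TmdAx φ → Tm4dAx φ
  | four (α : Form) : Tm4dAx (ax4 α)

/-- The system Tm + (Kdet). -/
inductive TmKdetAx : Form → Prop
  | tm {φ : Form} : TmAx φ → TmKdetAx φ
  | kdet (α β : Form) : TmKdetAx (axKdet α β)

/-- The system Km∘. -/
inductive KmCircAx : Form → Prop
  | pc {φ : Form} : Taut φ → KmCircAx φ
  | k'' (α β : Form) : KmCircAx ((circm α).imp (axK α β))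
  | k1'' (α β : Form) : KmCircAx ((circm β).imp (axK1 α β))
  | k2'' (α β : Form) : KmCircAx ((circm α).imp (axK2 α β))
  | m1 (α β : Form) : KmCircAx (axM1 α β)
  | m2 (α β : Form) : KmCircAx (axM2 α β)
  | m3'' (α β : Form) : KmCircAx ((circm α).imp (axM3 α β))
  | m4'' (α β : Form) : KmCircAx ((circm β).imp (axM4 α β))
  | i1' (α β : Form) : KmCircAx ((bulm α).imp (bulm (α.imp β)))
  | i2' (α β : Form) : KmCircAx ((bulm β).imp (bulm (α.imp β)))
  | dn1 (α : Form) : KmCircAx (axDN1 α)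
  | dn2 (α : Form) : KmCircAx (axDN2 α)

/- ## The eight-valued non-deterministic semantics -/

/-- The modal "letters" T, C, F, I. -/
inductive Ltr : Type
  | T | C | F | I
  deriving DecidableEq

/-- An eight-valued truth-value: a letter together with a sign (`true` = +). -/
structure V8 where
  ltr : Ltr
  sgn : Bool
  deriving DecidableEq

/-- Designated values: those with sign +. -/
def V8.desig (x : V8) : Prop := x.sgn = true

/-- Letter of the negation. -/
def lneg : Ltr → Ltr
  | .T => .F
  | .C => .C
  | .F => .T
  | .I => .I

/-- The (deterministic) multioperator for ¬. -/
def neg8 (x : V8) : Set V8 := {⟨lneg x.ltr, !x.sgn⟩}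

/-- Set of possible letters of an implication, given the letters of the components. -/
def limp : Ltr → Ltr → Set Ltr
  | .I, _ => {Ltr.I}
  | .T, .I => {Ltr.I}
  | .C, .I => {Ltr.I}
  | .F, .I => {Ltr.I}
  | .T, .T => {Ltr.T}
  | .T, .C => {Ltr.C}
  | .T, .F => {Ltr.F}
  | .C, .T => {Ltr.T}
  | .C, .C => {Ltr.T, Ltr.C}
  | .C, .F => {Ltr.C}
  | .F, .T => {Ltr.T}
  | .F, .C => {Ltr.T}
  | .F, .F => {Ltr.T}

/-- The multioperator for →: sign is material implication of the signs, letter as in `limp`. -/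
def imp8 (x y : V8) : Set V8 :=
  { z | z.ltr ∈ limp x.ltr y.ltr ∧ z.sgn = (!x.sgn || y.sgn) }

/-- The multioperator for □ in (the Nmatrix for) Km. -/
def box8Km (x : V8) : Set V8 :=
  if x.ltr = Ltr.T ∨ x.ltr = Ltr.I then { z | z.sgn = true } else { z | z.sgn = false }

/-- The multioperator for □ in the Nmatrix for K4m. -/
def box8K4m (x : V8) : Set V8 :=
  if x.ltr = Ltr.T ∨ x.ltr = Ltr.I then ({⟨Ltr.T, true⟩, ⟨Ltr.I, true⟩} : Set V8)
  else { z | z.sgn = false }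

/-- The multioperator for □ in the Nmatrix for K45m. -/
def box8K45m (x : V8) : Set V8 :=
  if x.ltr = Ltr.T ∨ x.ltr = Ltr.I then ({⟨Ltr.T, true⟩, ⟨Ltr.I, true⟩} : Set V8)
  else ({⟨Ltr.F, false⟩, ⟨Ltr.I, false⟩} : Set V8)

/-- A valuation over the eight-valued Nmatrix with the given □-multioperator. -/
def IsVal8 (boxOp : V8 → Set V8) (v : Form → V8) : Prop :=
  (∀ α, v (Form.neg α) ∈ neg8 (v α)) ∧
  (∀ α β, v (Form.imp α β) ∈ imp8 (v α) (v β)) ∧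
  (∀ α, v (Form.box α) ∈ boxOp (v α))

/-- Semantic consequence over the eight-valued Nmatrix with the given □-multioperator. -/
def NmEntails (boxOp : V8 → Set V8) (Γ : Set Form) (φ : Form) : Prop :=
  ∀ v : Form → V8, IsVal8 boxOp v → (∀ γ ∈ Γ, (v γ).desig) → (v φ).desig

/- ## Multialgebras -/

/-- A multialgebra over {¬,→,□}, presented on the carrier `V8` with a chosen domain. -/
structure MAlg where
  dom : Set V8
  negOp : V8 → Set V8
  impOp : V8 → V8 → Set V8
  boxOp : V8 → Set V8

/-- `A` is a submultialgebra of `B`. -/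
def SubMAlg (A B : MAlg) : Prop :=
  A.dom ⊆ B.dom ∧
  (∀ x ∈ A.dom, A.negOp x ⊆ B.negOp x) ∧
  (∀ x ∈ A.dom, ∀ y ∈ A.dom, A.impOp x y ⊆ B.impOp x y) ∧
  (∀ x ∈ A.dom, A.boxOp x ⊆ B.boxOp x)

/-- Domain of the Nmatrix for Dm: the six non-I values. -/
def domDm : Set V8 := { x | x.ltr ≠ Ltr.I }

/-- Domain of the Nmatrix for Tm: {T+, C+, C−, F−}. -/
def domTm : Set V8 :=
  ({⟨Ltr.T, true⟩, ⟨Ltr.C, true⟩, ⟨Ltr.C, false⟩, ⟨Ltr.F, false⟩} : Set V8)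

/-- The multialgebra underlying the Nmatrix for Km. -/
def A_Km : MAlg := ⟨Set.univ, neg8, imp8, box8Km⟩

/-- The □-multioperator of Dm: T ↦ {T+,C+,F+}, C∪F ↦ {T−,C−,F−}. -/
def boxDm (x : V8) : Set V8 :=
  if x.ltr = Ltr.T then { z | z.sgn = true } ∩ domDm else { z | z.sgn = false } ∩ domDm

/-- The multialgebra underlying the Nmatrix for Dm. -/
def A_Dm : MAlg :=
  ⟨domDm, fun x => neg8 x ∩ domDm, fun x y => imp8 x y ∩ domDm, boxDm⟩

/-- The □-multioperator of Tm: T+ ↦ {T+,C+}, and C+, C−, F− ↦ {C−,F−}. -/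
def boxTm (x : V8) : Set V8 :=
  if x = ⟨Ltr.T, true⟩ then ({⟨Ltr.T, true⟩, ⟨Ltr.C, true⟩} : Set V8)
  else ({⟨Ltr.C, false⟩, ⟨Ltr.F, false⟩} : Set V8)

/-- The multialgebra underlying the Nmatrix for Tm. -/
def A_Tm : MAlg :=
  ⟨domTm, fun x => neg8 x ∩ domTm, fun x y => imp8 x y ∩ domTm, boxTm⟩

/- ## The four-valued Nmatrix for Tmd -/

/-- The four values T+, C+, C−, F−. -/
inductive V4 : Type
  | Tp | Cp | Cm | Fm
  deriving DecidableEq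

/-- Designated values of the Tmd Nmatrix: T+ and C+. -/
def V4.desig (x : V4) : Prop := x = V4.Tp ∨ x = V4.Cp

/-- Negation: deterministic. -/
def neg4 : V4 → V4
  | .Tp => .Fm
  | .Cp => .Cm
  | .Cm => .Cp
  | .Fm => .Tp

/-- Position in the chain F− < C− < C+ < T+. -/
def rank4 : V4 → Nat
  | .Fm => 0
  | .Cm => 1
  | .Cp => 2
  | .Tp => 3

def ofRank4 : Nat → V4
  | 0 => .Fm
  | 1 => .Cm
  | 2 => .Cp
  | _ => .Tp

/-- The deterministic implication of Tmd: x→y is the maximum of ¬x and y in the chain. -/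
def imp4 (x y : V4) : V4 := ofRank4 (max (rank4 (neg4 x)) (rank4 y))

/-- The □-multioperator of Tmd: T+ ↦ {T+,C+}; C+, C−, F− ↦ {C−,F−}. -/
def box4 (x : V4) : Set V4 :=
  if x = V4.Tp then ({V4.Tp, V4.Cp} : Set V4) else ({V4.Cm, V4.Fm} : Set V4)

/-- A valuation over the Nmatrix for Tmd. -/
def IsVal4 (v : Form → V4) : Prop :=
  (∀ α, v (Form.neg α) = neg4 (v α)) ∧
  (∀ α β, v (Form.imp α β) = imp4 (v α) (v β)) ∧
  (∀ α, v (Form.box α) ∈ box4 (v α))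

/-- Semantic consequence over the Nmatrix for Tmd. -/
def TmdEntails (Γ : Set Form) (φ : Form) : Prop :=
  ∀ v : Form → V4, IsVal4 v → (∀ γ ∈ Γ, (v γ).desig) → (v φ).desig

/- ## Deterministic logical matrices -/

/-- A deterministic logical matrix over the signature {¬,→,□}. -/
structure DetMatrix where
  carrier : Type
  negOp : carrier → carrier
  impOp : carrier → carrier → carrier
  boxOp : carrier → carrier
  desig : Set carrier

/-- A valuation (homomorphism) over a deterministic matrix. -/
def DetMatrix.IsVal (Mat : DetMatrix) (h : Form → Mat.carrier) : Prop :=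
  (∀ α, h (Form.neg α) = Mat.negOp (h α)) ∧
  (∀ α β, h (Form.imp α β) = Mat.impOp (h α) (h β)) ∧
  (∀ α, h (Form.box α) = Mat.boxOp (h α))

/-- Semantic consequence over a deterministic matrix. -/
def DetMatrix.Entails (Mat : DetMatrix) (Γ : Set Form) (φ : Form) : Prop :=
  ∀ h : Form → Mat.carrier, Mat.IsVal h → (∀ γ ∈ Γ, h γ ∈ Mat.desig) → h φ ∈ Mat.desig

/-- Validity in a deterministic matrix. -/
def DetMatrix.Valid (Mat : DetMatrix) (φ : Form) : Prop :=
  ∀ h : Form → Mat.carrier, Mat.IsVal h → h φ ∈ Mat.desig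

/- ## The Dugundji formulas δ(m) -/

/-- Left-associated disjunction of a nonempty list of formulas. -/
def bigOr : List Form → Form
  | [] => Form.var 0
  | a :: l => l.foldl Form.disj a

/-- α(m): the left-associated disjunction of the variables p_1, …, p_m. -/
def alphaF (m : Nat) : Form := bigOr ((List.range m).map Form.var)

/-- β_i(m): the left-associated disjunction of p_1, …, p_m with p_i omitted. -/
def betaF (m i : Nat) : Form :=
  bigOr (((List.range m).filter (fun j => j != i)).map Form.var)

/-- δ(m): the left-associated disjunction of the formulas □α(m)→□β_i(m), 1 ≤ i ≤ m. -/
def deltaF (m : Nat) : Form :=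
  bigOr ((List.range m).map (fun i => (Form.box (alphaF m)).imp (Form.box (betaF m i))))

/- ## Auxiliary tautology lemmas -/

section TautLemmas

lemma tWeak (A B : Form) : Taut (A.imp (B.imp A)) := by
  intro v hn hi
  simp only [hi]
  cases v A <;> cases v B <;> rfl

lemma tT (α : Form) : Taut ((circm' α).imp (axT α)) := by
  intro v hn hi
  simp only [circm', axT, Form.conj, hi, hn]
  cases v (Form.box α) <;> cases v α <;> cases v (Form.box (Form.neg α)) <;> rfl

lemma tK (α β : Form) : Taut ((circm α).imp ((axK' α β).imp (axK α β))) := by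
  intro v hn hi
  simp only [circm, axK', axK, Form.dia, hi, hn]
  cases v (Form.box α) <;> cases v (Form.box (Form.neg α)) <;>
    cases v (Form.box (α.imp β)) <;> cases v (Form.box β) <;> rfl

lemma tK1 (α β : Form) :
    Taut ((circm β).imp ((axDN2 β).imp ((axK1' α β).imp (axK1 α β)))) := by
  intro v hn hi
  simp only [circm, axDN2, axK1', axK1, Form.dia, hi, hn]
  cases v (Form.box β) <;> cases v (Form.box (Form.neg β)) <;>
    cases v (Form.box (Form.neg (Form.neg β))) <;>
    cases v (Form.box (α.imp β)) <;> cases v (Form.box (Form.neg α)) <;> rfl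

lemma tK2 (α β : Form) :
    Taut ((circm' α).imp ((axK2' α β).imp (axK2 α β))) := by
  intro v hn hi
  simp only [circm', axK2', axK2, Form.conj, Form.dia, hi, hn]
  cases v (Form.box α) <;> cases v α <;> cases v (Form.box (Form.neg α)) <;>
    cases v (Form.box (Form.neg (α.imp β))) <;> cases v (Form.box (Form.neg β)) <;> rfl

lemma tM3 (α β : Form) :
    Taut ((circm' (Form.neg α)).imp ((axM3' α β).imp (axM3 α β))) := by
  intro v hn hi
  simp only [circm', axM3', axM3, Form.conj, Form.disj, Form.dia, hi, hn]
  cases v (Form.box (Form.neg α)) <;> cases v α <;>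
    cases v (Form.box (Form.neg (Form.neg α))) <;>
    cases v (Form.box (Form.neg β)) <;>
    cases v (Form.box (Form.neg (α.imp β))) <;> rfl

lemma tM4 (α β : Form) :
    Taut ((circm (α.imp β)).imp ((axDN2 β).imp ((axM2 α β).imp
      ((axM4' α β).imp (axM4 α β))))) := by
  intro v hn hi
  simp only [circm, axDN2, axM2, axM4', axM4, Form.dia, hi, hn]
  cases v (Form.box (α.imp β)) <;> cases v (Form.box (Form.neg (α.imp β))) <;>
    cases v (Form.box (Form.neg (Form.neg β))) <;> cases v (Form.box β) <;>
    cases v (Form.box (Form.neg (Form.neg α))) <;> rfl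

lemma tCirc (δ : Form) : Taut ((axT δ).imp ((axT (Form.neg δ)).imp (circm δ))) := by
  intro v hn hi
  simp only [axT, circm, Form.dia, hi, hn]
  cases v (Form.box δ) <;> cases v δ <;> cases v (Form.box (Form.neg δ)) <;> rfl

lemma tCirc' (γ : Form) : Taut ((axT γ).imp ((axT (Form.neg γ)).imp (circm' γ))) := by
  intro v hn hi
  simp only [axT, circm', Form.conj, hi, hn]
  cases v (Form.box γ) <;> cases v γ <;> cases v (Form.box (Form.neg γ)) <;> rfl

lemma tI1 (α β : Form) :
    Taut ((axT α).imp ((axT (Form.neg α)).imp (axI1 α β))) := by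
  intro v hn hi
  simp only [axT, axI1, Form.conj, hi, hn]
  cases v (Form.box α) <;> cases v α <;> cases v (Form.box (Form.neg α)) <;>
    cases v (Form.box (α.imp β)) <;> cases v (Form.box (Form.neg (α.imp β))) <;> rfl

lemma tI2 (α β : Form) :
    Taut ((axT β).imp ((axT (Form.neg β)).imp (axI2 α β))) := by
  intro v hn hi
  simp only [axT, axI2, Form.conj, hi, hn]
  cases v (Form.box β) <;> cases v β <;> cases v (Form.box (Form.neg β)) <;>
    cases v (Form.box (α.imp β)) <;> cases v (Form.box (Form.neg (α.imp β))) <;> rfl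

end TautLemmas

/-- In Tm, every instance ∘δ is derivable. -/
lemma tm_circ (Γ : Set Form) (δ : Form) : Deriv TmAx Γ (circm δ) :=
  Deriv.mp (Deriv.mp (Deriv.ax (TmAx.pc (tCirc δ))) (Deriv.ax (TmAx.t δ)))
    (Deriv.ax (TmAx.t (Form.neg δ)))

/-- In Tm, every instance ∘'γ is derivable. -/
lemma tm_circ' (Γ : Set Form) (γ : Form) : Deriv TmAx Γ (circm' γ) :=
  Deriv.mp (Deriv.mp (Deriv.ax (TmAx.pc (tCirc' γ))) (Deriv.ax (TmAx.t γ)))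
    (Deriv.ax (TmAx.t (Form.neg γ)))

/-- Derivability Adjustment Theorem between Km and Tm. -/
theorem DAT_Km_Tm (Γ : Set Form) (φ : Form) (hΓ : Γ.Finite) :
    Deriv TmAx Γ φ ↔
      ∃ Υ Υ' : Set Form,
        Deriv KmAx (Γ ∪ (circm '' Υ) ∪ (circm' '' Υ')) φ := by
  constructor
  · intro h
    refine ⟨Set.univ, Set.univ, ?_⟩
    have hc : ∀ δ, Deriv KmAx (Γ ∪ (circm '' (Set.univ : Set Form)) ∪
        (circm' '' (Set.univ : Set Form))) (circm δ) := fun δ =>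
      Deriv.prem (Or.inl (Or.inr ⟨δ, trivial, rfl⟩))
    have hc' : ∀ γ, Deriv KmAx (Γ ∪ (circm '' (Set.univ : Set Form)) ∪
        (circm' '' (Set.univ : Set Form))) (circm' γ) := fun γ =>
      Deriv.prem (Or.inr ⟨γ, trivial, rfl⟩)
    induction h with
    | prem hp => exact Deriv.prem (Or.inl (Or.inl hp))
    | mp _ _ ih1 ih2 => exact Deriv.mp ih1 ih2
    | ax ha =>
      cases ha with
      | pc t => exact Deriv.ax (KmAx.pc t)
      | k α β =>
        exact Deriv.mp (Deriv.mp (Deriv.ax (KmAx.pc (tK α β))) (hc α))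
          (Deriv.ax (KmAx.k' α β))
      | k1 α β =>
        exact Deriv.mp (Deriv.mp (Deriv.mp (Deriv.ax (KmAx.pc (tK1 α β))) (hc β))
          (Deriv.ax (KmAx.dn2 β))) (Deriv.ax (KmAx.k1' α β))
      | k2 α β =>
        exact Deriv.mp (Deriv.mp (Deriv.ax (KmAx.pc (tK2 α β))) (hc' α))
          (Deriv.ax (KmAx.k2' α β))
      | m1 α β => exact Deriv.ax (KmAx.m1 α β)
      | m2 α β => exact Deriv.ax (KmAx.m2 α β)
      | m3 α β =>
        exact Deriv.mp (Deriv.mp (Deriv.ax (KmAx.pc (tM3 α β))) (hc' (Form.neg α)))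
          (Deriv.ax (KmAx.m3' α β))
      | m4 α β =>
        exact Deriv.mp (Deriv.mp (Deriv.mp (Deriv.mp (Deriv.ax (KmAx.pc (tM4 α β)))
          (hc (α.imp β))) (Deriv.ax (KmAx.dn2 β))) (Deriv.ax (KmAx.m2 α β)))
          (Deriv.ax (KmAx.m4' α β))
      | t α => exact Deriv.mp (Deriv.ax (KmAx.pc (tT α))) (hc' α)
      | dn1 α => exact Deriv.ax (KmAx.dn1 α)
      | dn2 α => exact Deriv.ax (KmAx.dn2 α)
  · rintro ⟨Υ, Υ', h⟩
    induction h with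
    | prem hp =>
      rcases hp with (hp | ⟨δ, _, rfl⟩) | ⟨γ, _, rfl⟩
      · exact Deriv.prem hp
      · exact tm_circ Γ δ
      · exact tm_circ' Γ γ
    | mp _ _ ih1 ih2 => exact Deriv.mp ih1 ih2
    | ax ha =>
      cases ha with
      | pc t => exact Deriv.ax (TmAx.pc t)
      | k' α β =>
        exact Deriv.mp (Deriv.ax (TmAx.pc (tWeak (axK α β) (dia α))))
          (Deriv.ax (TmAx.k α β))
      | k1' α β =>
        exact Deriv.mp (Deriv.ax (TmAx.pc (tWeak (axK1 α β) (dia (Form.neg β)))))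
          (Deriv.ax (TmAx.k1 α β))
      | k2' α β =>
        exact Deriv.mp (Deriv.ax (TmAx.pc (tWeak (axK2 α β) (dia α))))
          (Deriv.ax (TmAx.k2 α β))
      | m1 α β => exact Deriv.ax (TmAx.m1 α β)
      | m2 α β => exact Deriv.ax (TmAx.m2 α β)
      | m3' α β =>
        exact Deriv.mp
          (Deriv.ax (TmAx.pc (tWeak (axM3 α β) ((dia α).disj (dia (Form.neg α))))))
          (Deriv.ax (TmAx.m3 α β))
      | m4' α β =>
        exact Deriv.mp (Deriv.ax (TmAx.pc (tWeak (axM4 α β) (dia (Form.neg β)))))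
          (Deriv.ax (TmAx.m4 α β))
      | i1 α β =>
        exact Deriv.mp (Deriv.mp (Deriv.ax (TmAx.pc (tI1 α β))) (Deriv.ax (TmAx.t α)))
          (Deriv.ax (TmAx.t (Form.neg α)))
      | i2 α β =>
        exact Deriv.mp (Deriv.mp (Deriv.ax (TmAx.pc (tI2 α β))) (Deriv.ax (TmAx.t β)))
          (Deriv.ax (TmAx.t (Form.neg β)))
      | dn1 α => exact Deriv.ax (TmAx.dn1 α)
      | dn2 α => exact Deriv.ax (TmAx.dn2 α)
end

section
/- (Soundness and completeness of Tmd) For every set Γ of modal formulas and every modal formula α: Γ ⊢_Tmd α if and only if Γ ⊨_{M_Tmd} α, where M_Tmd is the four-valued Nmatrix with deterministic implication described in the context. -/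
open Form

/-!
Soundness: on `M_Tmd` designation is classical for `¬` and `→`, `□φ` is designated exactly
when `φ` is `T+`, and `◇φ` exactly when `φ` is not `F−`; so every axiom instance is designated
for a propositional reason about which of its arguments are `T+` or `F−`.

Completeness: extend `Γ` to a maximal `Δ` not deriving `α`. A value of `M_Tmd` is determined by
whether it is designated, `T+`, `F−`, and (T) makes it consistent to give `φ` the value that is
designated iff `φ ∈ Δ`, `T+` iff `□φ ∈ Δ`, `F−` iff `◇φ ∉ Δ`. This is a valuation: for
`□(φ → ψ)` the table `x → y = max (¬x) y` is matched by (Kdet), (M1), (M2), and for `◇(φ → ψ)`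
by (K2), (M3), (M4).
-/

namespace V4

instance : DecidablePred V4.desig := fun x => inferInstanceAs (Decidable (x = Tp ∨ x = Cp))

theorem desig_neg4 (x : V4) : (neg4 x).desig ↔ ¬ x.desig := by
  cases x <;> decide

theorem desig_imp4 (x y : V4) : (imp4 x y).desig ↔ (x.desig → y.desig) := by
  cases x <;> cases y <;> decide

theorem neg4_eq_Tp (x : V4) : neg4 x = Tp ↔ x = Fm := by
  cases x <;> decide

theorem neg4_eq_Fm (x : V4) : neg4 x = Fm ↔ x = Tp := by
  cases x <;> decide

theorem imp4_eq_Tp (x y : V4) : imp4 x y = Tp ↔ x = Fm ∨ y = Tp := by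
  cases x <;> cases y <;> decide

theorem imp4_eq_Fm (x y : V4) : imp4 x y = Fm ↔ x = Tp ∧ y = Fm := by
  cases x <;> cases y <;> decide

theorem mem_box4 (x y : V4) : y ∈ box4 x ↔ (y.desig ↔ x = Tp) := by
  cases x <;> cases y <;> simp [box4, V4.desig]

theorem eq_iff_desig_Tp_Fm (x y : V4) :
    x = y ↔ (x.desig ↔ y.desig) ∧ (x = Tp ↔ y = Tp) ∧ (x = Fm ↔ y = Fm) := by
  cases x <;> cases y <;> decide

end V4

namespace IsVal4

variable {v : Form → V4}

theorem desig_neg (hv : IsVal4 v) (φ : Form) : (v (neg φ)).desig ↔ ¬ (v φ).desig := by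
  rw [hv.1, V4.desig_neg4]

theorem desig_imp (hv : IsVal4 v) (φ ψ : Form) :
    (v (imp φ ψ)).desig ↔ ((v φ).desig → (v ψ).desig) := by
  rw [hv.2.1, V4.desig_imp4]

theorem desig_box (hv : IsVal4 v) (φ : Form) : (v (box φ)).desig ↔ v φ = V4.Tp :=
  (V4.mem_box4 _ _).1 (hv.2.2 φ)

theorem desig_of_taut (hv : IsVal4 v) {φ : Form} (h : Taut φ) : (v φ).desig := by
  have := h (fun ψ => decide (v ψ).desig) (fun ψ => by simp [hv.desig_neg])
    (fun ψ χ => by simp [hv.desig_imp])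
  simpa using this

theorem desig_of_TmdAx (hv : IsVal4 v) {φ : Form} (h : TmdAx φ) : (v φ).desig := by
  cases h with
  | pc h => exact hv.desig_of_taut h
  | _ =>
    simp only [axK, axKdet, axK2, axM1, axM2, axM3, axM4, axT, axDN1, axDN2, dia,
      hv.desig_box, hv.1, hv.2.1, V4.desig_neg4, V4.desig_imp4, V4.neg4_eq_Tp,
      V4.neg4_eq_Fm, V4.imp4_eq_Tp, V4.imp4_eq_Fm]
    all_goals grind [V4.desig]

end IsVal4

theorem Tmd_sound {Γ : Set Form} {φ : Form} (h : Deriv TmdAx Γ φ) : TmdEntails Γ φ := by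
  intro v hv hΓ
  induction h with
  | prem h => exact hΓ _ h
  | ax h => exact hv.desig_of_TmdAx h
  | mp _ _ ih₁ ih₂ => exact (hv.desig_imp _ _).1 ih₁ ih₂

section Tautologies

variable (φ ψ χ : Form)

theorem taut_imp_self : Taut (φ.imp φ) := fun v _ hi => by
  simp only [hi]; cases v φ <;> rfl

theorem taut_imp_intro : Taut (ψ.imp (φ.imp ψ)) := fun v _ hi => by
  simp only [hi]; cases v φ <;> cases v ψ <;> rfl

theorem taut_imp_distrib : Taut ((φ.imp (ψ.imp χ)).imp ((φ.imp ψ).imp (φ.imp χ))) :=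
  fun v _ hi => by simp only [hi]; cases v φ <;> cases v ψ <;> cases v χ <;> rfl

theorem taut_neg_imp : Taut ((neg φ).imp (φ.imp ψ)) := fun v hn hi => by
  simp only [hi, hn]; cases v φ <;> cases v ψ <;> rfl

theorem taut_imp_neg_imp : Taut (φ.imp ((neg φ).imp ψ)) := fun v hn hi => by
  simp only [hi, hn]; cases v φ <;> cases v ψ <;> rfl

theorem taut_by_cases : Taut ((φ.imp ψ).imp (((neg φ).imp ψ).imp ψ)) := fun v hn hi => by
  simp only [hi, hn]; cases v φ <;> cases v ψ <;> rfl

end Tautologies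

namespace Deriv

variable {Ax : Form → Prop} {Γ Δ : Set Form} {φ ψ : Form}

theorem mono (hΓΔ : Γ ⊆ Δ) (h : Deriv Ax Γ φ) : Deriv Ax Δ φ := by
  induction h with
  | prem h => exact prem (hΓΔ h)
  | ax h => exact ax h
  | mp _ _ ih₁ ih₂ => exact mp ih₁ ih₂

theorem cut (hφ : Deriv Ax Γ φ) (h : Deriv Ax (insert φ Γ) ψ) : Deriv Ax Γ ψ := by
  induction h with
  | prem h =>
    rcases Set.mem_insert_iff.1 h with rfl | h
    exacts [hφ, prem h]
  | ax h => exact ax h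
  | mp _ _ ih₁ ih₂ => exact mp ih₁ ih₂

theorem exists_of_sUnion {c : Set (Set Form)} (hc : DirectedOn (· ⊆ ·) c) (hne : c.Nonempty)
    (h : Deriv Ax (⋃₀ c) φ) : ∃ Γ ∈ c, Deriv Ax Γ φ := by
  induction h with
  | prem h =>
    obtain ⟨Γ, hΓ, hφ⟩ := h
    exact ⟨Γ, hΓ, prem hφ⟩
  | ax h =>
    obtain ⟨Γ, hΓ⟩ := hne
    exact ⟨Γ, hΓ, ax h⟩
  | mp _ _ ih₁ ih₂ =>
    obtain ⟨Γ₁, hΓ₁, h₁⟩ := ih₁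
    obtain ⟨Γ₂, hΓ₂, h₂⟩ := ih₂
    obtain ⟨Γ, hΓ, h₁Γ, h₂Γ⟩ := hc Γ₁ hΓ₁ Γ₂ hΓ₂
    exact ⟨Γ, hΓ, mp (h₁.mono h₁Γ) (h₂.mono h₂Γ)⟩

variable (hAx : ∀ {φ}, Taut φ → Ax φ)
include hAx

theorem deduction (h : Deriv Ax (insert φ Γ) ψ) : Deriv Ax Γ (φ.imp ψ) := by
  induction h with
  | prem h =>
    rcases Set.mem_insert_iff.1 h with rfl | h
    · exact ax (hAx (taut_imp_self _))
    · exact mp (ax (hAx (taut_imp_intro φ _))) (prem h)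
  | ax h => exact mp (ax (hAx (taut_imp_intro φ _))) (ax h)
  | mp _ _ ih₁ ih₂ => exact mp (mp (ax (hAx (taut_imp_distrib _ _ _))) ih₁) ih₂

end Deriv

def IsMaxUnprovable (α : Form) (Δ : Set Form) : Prop :=
  Maximal (fun Γ => ¬ Deriv TmdAx Γ α) Δ

theorem exists_isMaxUnprovable {Γ : Set Form} {α : Form} (h : ¬ Deriv TmdAx Γ α) :
    ∃ Δ, Γ ⊆ Δ ∧ IsMaxUnprovable α Δ := by
  refine zorn_subset_nonempty {Δ | ¬ Deriv TmdAx Δ α} (fun c hc hchain hne => ?_) Γ h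
  refine ⟨⋃₀ c, fun hα => ?_, fun Δ => Set.subset_sUnion_of_mem⟩
  obtain ⟨Δ, hΔ, hα⟩ := Deriv.exists_of_sUnion hchain.directedOn hne hα
  exact hc hΔ hα

namespace IsMaxUnprovable

variable {α : Form} {Δ : Set Form} (H : IsMaxUnprovable α Δ)
include H

theorem not_deriv : ¬ Deriv TmdAx Δ α := H.prop

theorem deriv_insert_of_not_mem {φ : Form} (hφ : φ ∉ Δ) : Deriv TmdAx (insert φ Δ) α := by
  by_contra hα
  exact hφ (H.eq_of_subset hα (Set.subset_insert φ Δ) ▸ Set.mem_insert φ Δ)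

theorem mem_of_deriv {φ : Form} (h : Deriv TmdAx Δ φ) : φ ∈ Δ :=
  by_contra fun hφ => H.not_deriv (h.cut (H.deriv_insert_of_not_mem hφ))

theorem mem_of_TmdAx {φ : Form} (h : TmdAx φ) : φ ∈ Δ := H.mem_of_deriv (.ax h)

theorem mem_of_imp_mem {φ ψ : Form} (h : φ.imp ψ ∈ Δ) (hφ : φ ∈ Δ) : ψ ∈ Δ :=
  H.mem_of_deriv (.mp (.prem h) (.prem hφ))

theorem mem_of_imp_imp_mem {φ ψ χ : Form} (h : φ.imp (ψ.imp χ) ∈ Δ) (hφ : φ ∈ Δ)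
    (hψ : ψ ∈ Δ) : χ ∈ Δ :=
  H.mem_of_imp_mem (H.mem_of_imp_mem h hφ) hψ

theorem neg_mem_iff {φ : Form} : neg φ ∈ Δ ↔ φ ∉ Δ := by
  refine ⟨fun hn hφ => H.not_deriv ?_, fun hφ => by_contra fun hn => H.not_deriv ?_⟩
  · exact .mp (.mp (.ax (.pc (taut_imp_neg_imp φ α))) (.prem hφ)) (.prem hn)
  · have hpos := Deriv.deduction TmdAx.pc (H.deriv_insert_of_not_mem hφ)
    have hneg := Deriv.deduction TmdAx.pc (H.deriv_insert_of_not_mem hn)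
    exact .mp (.mp (.ax (.pc (taut_by_cases φ α))) hpos) hneg

theorem imp_mem_iff {φ ψ : Form} : φ.imp ψ ∈ Δ ↔ (φ ∈ Δ → ψ ∈ Δ) := by
  refine ⟨H.mem_of_imp_mem, fun h => ?_⟩
  by_cases hφ : φ ∈ Δ
  · exact H.mem_of_imp_mem (H.mem_of_TmdAx (.pc (taut_imp_intro φ ψ))) (h hφ)
  · exact H.mem_of_imp_mem (H.mem_of_TmdAx (.pc (taut_neg_imp φ ψ))) (H.neg_mem_iff.2 hφ)

theorem mem_of_box_mem {φ : Form} (h : box φ ∈ Δ) : φ ∈ Δ :=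
  H.mem_of_imp_mem (H.mem_of_TmdAx (.t φ)) h

theorem dia_mem_iff {φ : Form} : dia φ ∈ Δ ↔ box (neg φ) ∉ Δ := H.neg_mem_iff

theorem dia_neg_mem_iff {φ : Form} : dia (neg φ) ∈ Δ ↔ box φ ∉ Δ := by
  rw [H.dia_mem_iff]
  exact not_congr ⟨H.mem_of_imp_mem (H.mem_of_TmdAx (.dn2 φ)),
    H.mem_of_imp_mem (H.mem_of_TmdAx (.dn1 φ))⟩

theorem dia_mem_of_mem {φ : Form} (h : φ ∈ Δ) : dia φ ∈ Δ :=
  H.dia_mem_iff.2 fun hn => H.neg_mem_iff.1 (H.mem_of_box_mem hn) h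

theorem box_imp_mem_iff {φ ψ : Form} : box (φ.imp ψ) ∈ Δ ↔ (dia φ ∉ Δ ∨ box ψ ∈ Δ) := by
  refine ⟨fun h => or_iff_not_imp_left.2 fun hφ => ?_, ?_⟩
  · exact H.mem_of_imp_imp_mem (H.mem_of_TmdAx (.kdet φ ψ)) h (not_not.1 hφ)
  · rintro (hφ | hψ)
    · exact H.mem_of_imp_mem (H.mem_of_TmdAx (.m1 φ ψ)) (H.neg_mem_iff.2 hφ)
    · exact H.mem_of_imp_mem (H.mem_of_TmdAx (.m2 φ ψ)) hψ

theorem dia_imp_not_mem_iff {φ ψ : Form} :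
    dia (φ.imp ψ) ∉ Δ ↔ (box φ ∈ Δ ∧ dia ψ ∉ Δ) := by
  refine ⟨fun h => ⟨?_, ?_⟩, fun ⟨hφ, hψ⟩ h => ?_⟩
  · by_contra hφ
    exact h (H.mem_of_imp_mem (H.mem_of_TmdAx (.m4 φ ψ)) (H.dia_neg_mem_iff.2 hφ))
  · exact fun hψ => h (H.mem_of_imp_mem (H.mem_of_TmdAx (.m3 φ ψ)) hψ)
  · exact hψ (H.mem_of_imp_imp_mem (H.mem_of_TmdAx (.k2 φ ψ)) h hφ)

end IsMaxUnprovable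

open Classical in
noncomputable def canonV (Δ : Set Form) (φ : Form) : V4 :=
  if φ ∈ Δ then (if box φ ∈ Δ then V4.Tp else V4.Cp)
  else (if dia φ ∈ Δ then V4.Cm else V4.Fm)

theorem canonV_desig_iff {Δ : Set Form} {φ : Form} : (canonV Δ φ).desig ↔ φ ∈ Δ := by
  unfold canonV
  split_ifs <;> simp_all [V4.desig]

namespace IsMaxUnprovable

variable {α : Form} {Δ : Set Form} (H : IsMaxUnprovable α Δ)
include H

theorem canonV_eq_Tp_iff {φ : Form} : canonV Δ φ = V4.Tp ↔ box φ ∈ Δ := by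
  by_cases hφ : φ ∈ Δ
  · by_cases hbox : box φ ∈ Δ <;> simp [canonV, hφ, hbox]
  · have hbox : box φ ∉ Δ := mt H.mem_of_box_mem hφ
    by_cases hdia : dia φ ∈ Δ <;> simp [canonV, hφ, hbox, hdia]

theorem canonV_eq_Fm_iff {φ : Form} : canonV Δ φ = V4.Fm ↔ dia φ ∉ Δ := by
  by_cases hφ : φ ∈ Δ
  · have hdia : dia φ ∈ Δ := H.dia_mem_of_mem hφ
    by_cases hbox : box φ ∈ Δ <;> simp [canonV, hφ, hbox, hdia]
  · by_cases hdia : dia φ ∈ Δ <;> simp [canonV, hφ, hdia]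

theorem canonV_neg (φ : Form) : canonV Δ (neg φ) = neg4 (canonV Δ φ) := by
  rw [V4.eq_iff_desig_Tp_Fm]
  simp only [V4.desig_neg4, V4.neg4_eq_Tp, V4.neg4_eq_Fm, canonV_desig_iff,
    H.canonV_eq_Tp_iff, H.canonV_eq_Fm_iff, H.neg_mem_iff, H.dia_neg_mem_iff,
    H.dia_mem_iff, not_not, and_self]

theorem canonV_imp (φ ψ : Form) :
    canonV Δ (φ.imp ψ) = imp4 (canonV Δ φ) (canonV Δ ψ) := by
  rw [V4.eq_iff_desig_Tp_Fm]
  simp only [V4.desig_imp4, V4.imp4_eq_Tp, V4.imp4_eq_Fm, canonV_desig_iff,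
    H.canonV_eq_Tp_iff, H.canonV_eq_Fm_iff, H.imp_mem_iff, H.box_imp_mem_iff,
    H.dia_imp_not_mem_iff, and_self]

theorem canonV_box (φ : Form) : canonV Δ (box φ) ∈ box4 (canonV Δ φ) := by
  rw [V4.mem_box4, canonV_desig_iff, H.canonV_eq_Tp_iff]

theorem isVal4_canonV : IsVal4 (canonV Δ) := ⟨H.canonV_neg, H.canonV_imp, H.canonV_box⟩

end IsMaxUnprovable

theorem Tmd_complete {Γ : Set Form} {α : Form} (h : TmdEntails Γ α) : Deriv TmdAx Γ α := by
  by_contra hα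
  obtain ⟨Δ, hΓΔ, H⟩ := exists_isMaxUnprovable hα
  have hdesig := h (canonV Δ) H.isVal4_canonV fun γ hγ => canonV_desig_iff.2 (hΓΔ hγ)
  exact H.not_deriv (.prem (canonV_desig_iff.1 hdesig))

/-- Soundness and completeness of Tmd with respect to the four-valued Nmatrix M_Tmd
with deterministic implication. -/
theorem Tmd_sound_complete (Γ : Set Form) (α : Form) :
    Deriv TmdAx Γ α ↔ TmdEntails Γ α :=
  ⟨Tmd_sound, Tmd_complete⟩
end
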